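/- Let m ≥ 2 and n ≥ 2m+1. The sequence π = ((n−1)^m, m^{n−m}), consisting of m terms equal to n−1 and n−m terms equal to m, is graphic but not potentially C_{2m+1}-graphic; consequently σ(C_{2m+1}, n) ≥ σ(π) + 2 = m(2n − m − 1) + 2. -/

import Mathlib

/-- `G` contains a cycle of length `r`. -/
def hasCycleOfLength {V : Type*} (G : SimpleGraph V) (r : ℕ) : Prop :=
  ∃ (v : V) (c : G.Walk v v), c.IsCycle ∧ c.length = r

/-- `G` is a realization of the sequence `d`, i.e. `d` is its degree sequence. -/
def IsDegreeSeq {n : ℕ} (G : SimpleGraph (Fin n)) (d : Fin n → ℕ) : Prop :=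
  ∀ i, (G.neighborSet i).ncard = d i

/-- The sequence `d` is graphic: it is the degree sequence of a simple graph. -/
def Graphic {n : ℕ} (d : Fin n → ℕ) : Prop :=
  ∃ G : SimpleGraph (Fin n), IsDegreeSeq G d

/-- `d` is potentially ₃Cℓ-graphic: some realization contains cycles of every
length `r` with `3 ≤ r ≤ ℓ`. -/
def Pot3C {n : ℕ} (ℓ : ℕ) (d : Fin n → ℕ) : Prop :=
  ∃ G : SimpleGraph (Fin n), IsDegreeSeq G d ∧ ∀ r, 3 ≤ r → r ≤ ℓ → hasCycleOfLength G r

/-- `d` is potentially Cℓ-graphic: some realization contains a cycle of length `ℓ`. -/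
def PotC {n : ℕ} (ℓ : ℕ) (d : Fin n → ℕ) : Prop :=
  ∃ G : SimpleGraph (Fin n), IsDegreeSeq G d ∧ hasCycleOfLength G ℓ

/-- `d` has a realization `G` containing cycles `C₃, …, C_ℓ` on those vertices with
degrees `d 0, …, d (ℓ-1)`: the induced subgraph on some vertex set `S`, whose multiset
of degrees is that of the first `ℓ` terms of `d`, contains cycles of all lengths
from `3` to `ℓ`. -/
def RealizationWithCyclesOn {n : ℕ} (ℓ : ℕ) (d : Fin n → ℕ) : Prop :=
  ∃ (G : SimpleGraph (Fin n)) (S : Finset (Fin n)),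
    IsDegreeSeq G d ∧ S.card = ℓ ∧
    S.val.map d = (Finset.univ.filter (fun i : Fin n => (i : ℕ) < ℓ)).val.map d ∧
    ∀ r, 3 ≤ r → r ≤ ℓ → hasCycleOfLength (G.induce (S : Set (Fin n))) r

/-- The sequence `((n-1)^m, m^{n-m})`. -/
def seqOddLB (m n : ℕ) : Fin n → ℕ := fun j =>
  if (j : ℕ) < m then n - 1 else m



/-!
The realizations of `((n-1)^m, m^{n-m})` are exactly the complete split graph: the `m` vertices
of degree `n - 1` are universal, so each vertex of degree `m` is adjacent to them and to nothing
else. Hence the `m` vertices of high degree form a vertex cover, and a cycle all of whose edges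
meet a vertex cover `A` has length at most `2 |A|`, which rules out `C_{2m+1}`. As `σ(π)` is
even, every even threshold forcing `C_{2m+1}` exceeds it by at least `2`.
-/

open Finset

namespace SimpleGraph

variable {V : Type*} {G : SimpleGraph V}

lemma ncard_neighborSet_eq_degree [Fintype V] [DecidableRel G.Adj] (v : V) :
    (G.neighborSet v).ncard = G.degree v := by
  rw [← card_neighborSet_eq_degree, Set.ncard_eq_toFinset_card', Set.toFinset_card]

/-- Every dart of the cycle has an endpoint in `A`; the first endpoints of the darts are a
rotation of the second endpoints, and those are pairwise distinct. -/
theorem Walk.IsCycle.length_le_two_mul_card [DecidableEq V] {v : V} {c : G.Walk v v}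
    (hc : c.IsCycle) {A : Finset V} (hA : G.IsVertexCover A) : c.length ≤ 2 * #A := by
  set p : V → Bool := fun x => x ∈ A
  have hsnd : (c.darts.map (·.snd)).countP p ≤ #A := by
    rw [c.map_snd_darts, List.countP_eq_length_filter]
    refine ((hc.support_nodup.filter _).subperm fun x hx => ?_).length_le.trans_eq A.length_toList
    simpa [p] using (List.mem_filter.mp hx).2
  have hfst : (c.darts.map (·.fst)).countP p = (c.darts.map (·.snd)).countP p := by
    have := congrArg (List.countP p) c.map_fst_darts_append
    rw [← c.cons_tail_support, ← c.map_snd_darts, List.countP_append, List.countP_cons,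
      List.countP_cons, List.countP_nil] at this
    omega
  have hcover : c.darts.length ≤
      c.darts.countP (p ∘ (·.fst)) + c.darts.countP (p ∘ (·.snd)) := by
    rw [List.length_eq_countP_add_countP (p ∘ (·.fst))]
    gcongr
    refine List.countP_mono_left fun d _ h => ?_
    simpa [p] using (hA d.adj).resolve_left (by simpa [p] using h)
  simp only [List.countP_map] at hfst hsnd
  rw [← c.length_darts]
  omega

end SimpleGraph

open SimpleGraph

lemma Graphic.even_sum {n : ℕ} {d : Fin n → ℕ} (hd : Graphic d) : Even (∑ i, d i) := by
  classical
  obtain ⟨G, hG⟩ := hd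
  have hdeg : ∑ i, d i = ∑ i, G.degree i :=
    sum_congr rfl fun i _ => by rw [← hG i, ncard_neighborSet_eq_degree]
  rw [hdeg, sum_degrees_eq_twice_card_edges]
  exact even_two_mul _

/-- The complete split graph `K_m ∨ \bar K_{n-m}`. -/
def completeSplitGraph (m n : ℕ) : SimpleGraph (Fin n) :=
  SimpleGraph.fromRel fun i _ => (i : ℕ) < m

variable {m n : ℕ}

lemma completeSplitGraph_isDegreeSeq (h : m ≤ n) :
    IsDegreeSeq (completeSplitGraph m n) (seqOddLB m n) := by
  intro i
  by_cases hi : (i : ℕ) < m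
  · have : (completeSplitGraph m n).neighborSet i = {i}ᶜ := by
      ext j; simp [completeSplitGraph, hi, eq_comm]
    rw [this, Set.ncard_eq_toFinset_card']
    simp [card_compl, seqOddLB, hi]
  · have : (completeSplitGraph m n).neighborSet i = ↑({j | (j : ℕ) < m} : Finset (Fin n)) := by
      ext j
      simp only [completeSplitGraph, mem_neighborSet, fromRel_adj, hi, false_or, coe_filter,
        mem_univ, true_and, Set.mem_ofPred_eq]
      grind
    rw [this, Set.ncard_coe_finset, Fin.card_filter_val_lt]
    simp [seqOddLB, hi, h]

lemma sum_seqOddLB (h : m ≤ n) : ∑ i, seqOddLB m n i = m * (2 * n - m - 1) := by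
  obtain ⟨k, rfl⟩ := Nat.exists_eq_add_of_le h
  simp only [seqOddLB]
  rw [Fin.sum_univ_eq_sum_range (fun j => if j < m then m + k - 1 else m), sum_range_add]
  simp only [mem_range, imp_self, implies_true, sum_ite_of_true, sum_const, card_range,
    smul_eq_mul, add_lt_iff_neg_left, not_lt_zero, ↓reduceIte]
  rw [show 2 * (m + k) - m - 1 = (m + k - 1) + k by omega]
  ring

lemma antitone_seqOddLB : Antitone (seqOddLB m n) := by
  intro i j hij
  simp only [seqOddLB]
  split_ifs <;> omega

lemma IsDegreeSeq.isUniversal_of_seqOddLB {G : SimpleGraph (Fin n)} (hG : IsDegreeSeq G (seqOddLB m n))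
    {i : Fin n} (hi : (i : ℕ) < m) : G.IsUniversal i := by
  classical
  rw [← degree_eq_card_sub_one, ← ncard_neighborSet_eq_degree, hG i, Fintype.card_fin]
  simp [seqOddLB, hi]

lemma IsDegreeSeq.isVertexCover_of_seqOddLB {G : SimpleGraph (Fin n)}
    (hG : IsDegreeSeq G (seqOddLB m n)) :
    G.IsVertexCover ↑({j | (j : ℕ) < m} : Finset (Fin n)) := by
  classical
  intro x y hxy
  by_contra! h
  simp only [coe_filter, mem_univ, true_and, Set.mem_ofPred_eq, not_lt] at h
  have hsub : insert y ({j | (j : ℕ) < m} : Finset (Fin n)) ⊆ G.neighborFinset x := by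
    intro j hj
    rcases mem_insert.mp hj with rfl | hj
    · simpa using hxy
    · simp only [mem_filter, mem_univ, true_and] at hj
      simpa using (hG.isUniversal_of_seqOddLB hj (by omega : j ≠ x)).symm
  have hcard := card_le_card hsub
  rw [card_insert_of_notMem (by simpa using h.2), Fin.card_filter_val_lt,
    card_neighborFinset_eq_degree, ← ncard_neighborSet_eq_degree, hG x, seqOddLB,
    if_neg (not_lt.mpr h.1)] at hcard
  omega

lemma not_potC_seqOddLB : ¬ PotC (2 * m + 1) (seqOddLB m n) := by
  rintro ⟨G, hG, v, c, hc, hlen⟩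
  have := hc.length_le_two_mul_card hG.isVertexCover_of_seqOddLB
  have := Fin.card_filter_val_lt (n := n) (m := m)
  omega

theorem sigma_C_odd_lower_general (m n : ℕ) (hn : 2 * m + 1 ≤ n) :
    Graphic (seqOddLB m n) ∧
    ¬ PotC (2 * m + 1) (seqOddLB m n) ∧
    (∀ s : ℕ, Even s →
      (∀ e : Fin n → ℕ, Antitone e → Graphic e → s ≤ ∑ i, e i → PotC (2 * m + 1) e) →
      m * (2 * n - m - 1) + 2 ≤ s) := by
  have hgraphic : Graphic (seqOddLB m n) := ⟨_, completeSplitGraph_isDegreeSeq (by omega)⟩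
  refine ⟨hgraphic, not_potC_seqOddLB, fun s hs hforce => ?_⟩
  have hlt : ∑ i, seqOddLB m n i < s := lt_of_not_ge fun hle =>
    not_potC_seqOddLB (hforce _ antitone_seqOddLB hgraphic hle)
  obtain ⟨a, ha⟩ := hs
  obtain ⟨b, hb⟩ := hgraphic.even_sum
  rw [sum_seqOddLB (by omega)] at hlt hb
  omega

/-- **Lower bound for `σ(C_{2m+1}, n)`.** For `m ≥ 2` and `n ≥ 2m+1`, the sequence
`((n-1)^m, m^{n-m})` is graphic but not potentially `C_{2m+1}`-graphic; consequently
every even integer `s` such that all graphic sequences of length `n` with sum at least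
`s` are potentially `C_{2m+1}`-graphic satisfies `s ≥ m(2n - m - 1) + 2`. -/
theorem sigma_C_odd_lower (m n : ℕ) (hm : 2 ≤ m) (hn : 2 * m + 1 ≤ n) :
    Graphic (seqOddLB m n) ∧
    ¬ PotC (2 * m + 1) (seqOddLB m n) ∧
    (∀ s : ℕ, Even s →
      (∀ e : Fin n → ℕ, Antitone e → Graphic e → s ≤ ∑ i, e i → PotC (2 * m + 1) e) →
      m * (2 * n - m - 1) + 2 ≤ s) :=
  sigma_C_odd_lower_general m n hn
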